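/- arXiv:1107.0634 — 3 statements merged into one kernel-verified Lean document; each statement's English description precedes it below -/
import Mathlib

section
/- Let k ≥ 1, c ≥ 2, m ≥ 1 be integers with m ≥ 3ck. Let w(R), w(S), w(F), δ ∈ ℚ_{≥0}^k (componentwise nonnegative vectors) and w(R'), and suppose componentwise: (1) w(R') ≥ w(S) − 2k·δ − (1/c)·(w(S) − w(F)), (2) δ ≤ w(F)/(3ck), (3) w(F) ≥ (3ck/m)·w(R), (4) w(S) ≥ (1 − 1/m)·w(R), and (5) w(F) ≤ w(S). Then w(R') ≥ (1 − 1/c)·w(R) componentwise. -/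
/-!
Componentwise, the heavy edges pay for the rounding: since `δ ≤ w(F)/(3ck)`, the loss `2kδ` is at
most `(2/3c)·w(F)`, so `w(R') ≥ (1 - 1/c)·w(S) + w(F)/(3c)`. Inserting `w(S) ≥ (1 - 1/m)·w(R)` and
`w(F) ≥ (3ck/m)·w(R)` leaves `(1 - 1/c)·w(R)` plus the surplus `(k - 1 + 1/c)·w(R)/m ≥ 0`.
-/

section

variable {K : Type*} [Field K] [LinearOrder K] [IsStrictOrderedRing K]

theorem heavy_weight_absorbs_rounding_loss {k c S F δ R' : K} (hk : 0 < k) (hc : 0 < c)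
    (h1 : S - 2 * k * δ - 1 / c * (S - F) ≤ R') (h2 : δ ≤ F / (3 * c * k)) :
    (1 - 1 / c) * S + F / (3 * c) ≤ R' := by
  have hloss : 2 * k * δ ≤ 2 * F / (3 * c) := by
    calc 2 * k * δ ≤ 2 * k * (F / (3 * c * k)) := by gcongr
      _ = 2 * F / (3 * c) := by field_simp
  calc (1 - 1 / c) * S + F / (3 * c) = S - 2 * F / (3 * c) - 1 / c * (S - F) := by ring
    _ ≤ S - 2 * k * δ - 1 / c * (S - F) := by gcongr
    _ ≤ R' := h1

theorem one_sub_one_div_mul_le_of_heavy_weight {k c t R S F R' : K} (hk : 1 ≤ k) (hc : 1 ≤ c)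
    (ht : 0 ≤ t) (hR : 0 ≤ R)
    (hR' : (1 - 1 / c) * S + F / (3 * c) ≤ R') (hF : 3 * c * k * t * R ≤ F)
    (hS : (1 - t) * R ≤ S) :
    (1 - 1 / c) * R ≤ R' := by
  have hc0 : 0 < c := by linarith
  have hc1 : 0 ≤ 1 - 1 / c := by rw [sub_nonneg, div_le_one hc0]; exact hc
  have hsurplus : 0 ≤ (k - (1 - 1 / c)) * t * R := by
    have : 0 ≤ k - (1 - 1 / c) := by linarith [one_div_pos.mpr hc0]
    positivity
  calc (1 - 1 / c) * R ≤ (1 - 1 / c) * ((1 - t) * R) + k * t * R := by linarith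
    _ = (1 - 1 / c) * ((1 - t) * R) + 3 * c * k * t * R / (3 * c) := by field_simp
    _ ≤ (1 - 1 / c) * S + F / (3 * c) := by gcongr
    _ ≤ R' := hR'

end

theorem tsp_estimation_general (k c m : ℕ) (hk : 1 ≤ k) (hc : 2 ≤ c)
    (wR wS wF δ wR' : Fin k → ℚ)
    (hRnn : ∀ i, 0 ≤ wR i)
    (h1 : ∀ i, wS i - 2 * (k : ℚ) * δ i - (1 / (c : ℚ)) * (wS i - wF i) ≤ wR' i)
    (h2 : ∀ i, δ i ≤ wF i / (3 * (c : ℚ) * (k : ℚ)))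
    (h3 : ∀ i, (3 * (c : ℚ) * (k : ℚ) / (m : ℚ)) * wR i ≤ wF i)
    (h4 : ∀ i, (1 - 1 / (m : ℚ)) * wR i ≤ wS i) :
    ∀ i, (1 - 1 / (c : ℚ)) * wR i ≤ wR' i := by
  intro i
  have hkQ : (1 : ℚ) ≤ k := by exact_mod_cast hk
  have hcQ : (1 : ℚ) ≤ c := by exact_mod_cast (by omega : 1 ≤ c)
  refine one_sub_one_div_mul_le_of_heavy_weight hkQ hcQ (t := 1 / (m : ℚ)) (by positivity)
    (hRnn i) (heavy_weight_absorbs_rounding_loss (by linarith) (by linarith) (h1 i) (h2 i))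
    ?_ (h4 i)
  simpa only [mul_one_div] using h3 i

/-- Central estimation in the analysis of the multiobjective Max-TSP algorithm:
the losses from removing one edge per cycle are absorbed by the heavy fixed edges,
yielding a `(1 - 1/c)`-approximation componentwise. -/
theorem tsp_estimation (k c m : ℕ) (hk : 1 ≤ k) (hc : 2 ≤ c) (hm : 1 ≤ m)
    (hmck : 3 * c * k ≤ m)
    (wR wS wF δ wR' : Fin k → ℚ)
    (hRnn : ∀ i, 0 ≤ wR i) (hSnn : ∀ i, 0 ≤ wS i) (hFnn : ∀ i, 0 ≤ wF i)
    (hδnn : ∀ i, 0 ≤ δ i)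
    (h1 : ∀ i, wS i - 2 * (k : ℚ) * δ i - (1 / (c : ℚ)) * (wS i - wF i) ≤ wR' i)
    (h2 : ∀ i, δ i ≤ wF i / (3 * (c : ℚ) * (k : ℚ)))
    (h3 : ∀ i, (3 * (c : ℚ) * (k : ℚ) / (m : ℚ)) * wR i ≤ wF i)
    (h4 : ∀ i, (1 - 1 / (m : ℚ)) * wR i ≤ wS i)
    (h5 : ∀ i, wF i ≤ wS i) :
    ∀ i, (1 - 1 / (c : ℚ)) * wR i ≤ wR' i :=
  tsp_estimation_general k c m hk hc wR wS wF δ wR' hRnn h1 h2 h3 h4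
end

section
/- Let k ≥ 1, let H be a finite set of clauses over variables V with weight function w : H → ℕ^k, and let I_o : V → {0,1} be any truth assignment. If |V| > 4k², then there exist disjoint sets V^0 ⊆ I_o^{-1}(0) and V^1 ⊆ I_o^{-1}(1) with |V^0 ∪ V^1| ≤ 4k² such that, setting G = H \ (H[V^0 = 0] ∪ H[V^1 = 1]), for every variable v ∈ V \ (V^0 ∪ V^1) and every coordinate i ∈ {1,…,k}: w_i(G[v = I_o(v)]) ≤ (1/(4k)) · w_i(H \ G). -/
set_option linter.unusedSectionVars false


namespace GreedyAux

variable {V : Type*} [Fintype V] [DecidableEq V] {k : ℕ}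

def Gset (H : Finset (Finset (V × Bool))) (Io : V → Bool) (S : Finset V) :
    Finset (Finset (V × Bool)) :=
  H \ H.filter (fun C => ∃ v ∈ S, (v, Io v) ∈ C)

def Wt (w : Finset (V × Bool) → Fin k → ℕ) (T : Finset (Finset (V × Bool))) (i : Fin k) : ℕ :=
  ∑ C ∈ T, w C i

def fw (H : Finset (Finset (V × Bool))) (w : Finset (V × Bool) → Fin k → ℕ)
    (Io : V → Bool) (S : Finset V) (v : V) (i : Fin k) : ℕ :=
  Wt w ((Gset H Io S).filter (fun C => (v, Io v) ∈ C)) i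

variable (H : Finset (Finset (V × Bool))) (w : Finset (V × Bool) → Fin k → ℕ) (Io : V → Bool)

lemma Gset_subset (S : Finset V) : Gset H Io S ⊆ H := Finset.sdiff_subset

lemma Gset_mono {S S' : Finset V} (h : S ⊆ S') : Gset H Io S' ⊆ Gset H Io S := by
  refine Finset.sdiff_subset_sdiff (Finset.Subset.refl H) ?_
  intro C hC
  simp only [Finset.mem_filter] at *
  obtain ⟨h1, v0, hv0, hm0⟩ := hC
  exact ⟨h1, v0, h hv0, hm0⟩

lemma Gset_insert (u : V) (S : Finset V) :
    Gset H Io (insert u S) = (Gset H Io S).filter (fun C => (u, Io u) ∉ C) := by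
  ext C
  simp only [Gset, Finset.mem_sdiff, Finset.mem_filter, Finset.mem_insert]
  constructor
  · rintro ⟨hC, h⟩
    refine ⟨⟨hC, fun h' => h ?_⟩, fun h' => h ⟨hC, u, Or.inl rfl, h'⟩⟩
    obtain ⟨hC', v', hv', hm'⟩ := h'
    exact ⟨hC, v', Or.inr hv', hm'⟩
  · rintro ⟨⟨hC, h⟩, hu⟩
    refine ⟨hC, ?_⟩
    rintro ⟨-, v', hv' | hv', hm'⟩
    · exact hu (hv' ▸ hm')
    · exact h ⟨hC, v', hv', hm'⟩

lemma Wt_sdiff {A B : Finset (Finset (V × Bool))} (hAB : A ⊆ B) (hBH : B ⊆ H) (i : Fin k) :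
    Wt w (H \ A) i = Wt w (H \ B) i + Wt w (B \ A) i := by
  have h1 : Wt w (H \ A) i + Wt w A i = Wt w H i := Finset.sum_sdiff (hAB.trans hBH)
  have h2 : Wt w (H \ B) i + Wt w B i = Wt w H i := Finset.sum_sdiff hBH
  have h3 : Wt w (B \ A) i + Wt w A i = Wt w B i := Finset.sum_sdiff hAB
  omega

lemma Wt_mono {A B : Finset (Finset (V × Bool))} (h : A ⊆ B) (i : Fin k) :
    Wt w A i ≤ Wt w B i :=
  Finset.sum_le_sum_of_subset h

lemma fw_mono {S S' : Finset V} (h : S ⊆ S') (v : V) (i : Fin k) :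
    fw H w Io S' v i ≤ fw H w Io S v i := by
  apply Wt_mono
  exact Finset.filter_subset_filter _ (Gset_mono H Io h)

lemma Gset_sdiff_insert (u : V) (S : Finset V) :
    Gset H Io S \ Gset H Io (insert u S) = (Gset H Io S).filter (fun C => (u, Io u) ∈ C) := by
  rw [Gset_insert]
  ext C
  simp only [Finset.mem_sdiff, Finset.mem_filter]
  tauto

lemma phase [Nonempty V] (i : Fin k) :
    ∀ (m : ℕ) (S : Finset V), ∃ S' : Finset V, S ⊆ S' ∧ S'.card ≤ S.card + m ∧
      ∀ v, m * fw H w Io S' v i ≤ Wt w (Gset H Io S \ Gset H Io S') i := by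
  intro m
  induction m with
  | zero => intro S; exact ⟨S, Finset.Subset.refl S, by omega, fun v => by simp [Wt]⟩
  | succ m ih =>
    intro S
    obtain ⟨u, -, hu⟩ := Finset.exists_max_image Finset.univ (fun v => fw H w Io S v i)
      Finset.univ_nonempty
    obtain ⟨S', hsub, hcard, hbound⟩ := ih (insert u S)
    refine ⟨S', (Finset.subset_insert u S).trans hsub, ?_, ?_⟩
    · calc S'.card ≤ (insert u S).card + m := hcard
        _ ≤ (S.card + 1) + m := by
            have := Finset.card_insert_le u S; omega
        _ = S.card + (m + 1) := by omega
    · intro v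
      have hstep : Wt w (Gset H Io S \ Gset H Io S') i
          = fw H w Io S u i + Wt w (Gset H Io (insert u S) \ Gset H Io S') i := by
        have e1 : Wt w (H \ Gset H Io S') i
            = Wt w (H \ Gset H Io S) i + Wt w (Gset H Io S \ Gset H Io S') i :=
          Wt_sdiff H w (Gset_mono H Io ((Finset.subset_insert u S).trans hsub))
            (Gset_subset H Io S) i
        have e2 : Wt w (H \ Gset H Io S') i
            = Wt w (H \ Gset H Io (insert u S)) i
              + Wt w (Gset H Io (insert u S) \ Gset H Io S') i :=
          Wt_sdiff H w (Gset_mono H Io hsub) (Gset_subset H Io (insert u S)) i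
        have e3 : Wt w (H \ Gset H Io (insert u S)) i
            = Wt w (H \ Gset H Io S) i + Wt w (Gset H Io S \ Gset H Io (insert u S)) i :=
          Wt_sdiff H w (Gset_mono H Io (Finset.subset_insert u S)) (Gset_subset H Io S) i
        have e4 : Wt w (Gset H Io S \ Gset H Io (insert u S)) i = fw H w Io S u i := by
          rw [Gset_sdiff_insert]; rfl
        omega
      have hfv : fw H w Io S' v i ≤ fw H w Io S u i :=
        le_trans (fw_mono H w Io ((Finset.subset_insert u S).trans hsub) v i)
          (hu v (Finset.mem_univ v))
      have := hbound v
      calc (m + 1) * fw H w Io S' v i = fw H w Io S' v i + m * fw H w Io S' v i := by ring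
        _ ≤ fw H w Io S u i + Wt w (Gset H Io (insert u S) \ Gset H Io S') i := by omega
        _ = Wt w (Gset H Io S \ Gset H Io S') i := hstep.symm

lemma phases [Nonempty V] :
    ∀ (j : ℕ), j ≤ k → ∃ S : Finset V, S.card ≤ j * (4 * k) ∧
      ∀ i : Fin k, (i : ℕ) < j → ∀ v, 4 * k * fw H w Io S v i ≤ Wt w (H \ Gset H Io S) i := by
  intro j
  induction j with
  | zero => exact fun _ => ⟨∅, by simp, fun i hi => by omega⟩
  | succ j ih =>
    intro hj
    obtain ⟨S, hcard, hS⟩ := ih (by omega)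
    obtain ⟨S', hsub, hcard', hbound⟩ := phase H w Io ⟨j, hj⟩ (4 * k) S
    have hc : S'.card ≤ (j + 1) * (4 * k) := by
      have he : (j + 1) * (4 * k) = j * (4 * k) + 4 * k := by ring
      omega
    refine ⟨S', hc, ?_⟩
    intro i hi v
    rcases Nat.lt_or_ge (i : ℕ) j with h | h
    · calc 4 * k * fw H w Io S' v i ≤ 4 * k * fw H w Io S v i :=
            Nat.mul_le_mul_left _ (fw_mono H w Io hsub v i)
        _ ≤ Wt w (H \ Gset H Io S) i := hS i h v
        _ ≤ Wt w (H \ Gset H Io S') i := Wt_mono w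
            (Finset.sdiff_subset_sdiff (Finset.Subset.refl H) (Gset_mono H Io hsub)) i
    · have hij : i = ⟨j, hj⟩ := Fin.ext (show (i : ℕ) = j by omega)
      subst hij
      calc 4 * k * fw H w Io S' v ⟨j, hj⟩ ≤ Wt w (Gset H Io S \ Gset H Io S') ⟨j, hj⟩ :=
            hbound v
        _ ≤ Wt w (H \ Gset H Io S') ⟨j, hj⟩ := Wt_mono w
            (Finset.sdiff_subset_sdiff (Gset_subset H Io S) (Finset.Subset.refl _)) _

end GreedyAux


/-- Greedy selection of heavy variables for multiobjective MaxSAT: there are disjoint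
sets `V0 ⊆ Io⁻¹(0)`, `V1 ⊆ Io⁻¹(1)` of at most `4k²` variables such that, after removing
the clauses they satisfy under `Io`, every remaining variable contributes (under `Io`)
at most a `1/(4k)` fraction of the removed weight in every coordinate. -/
theorem greedy_heavy_variables {V : Type*} [Fintype V] [DecidableEq V] (k : ℕ) (hk : 1 ≤ k)
    (H : Finset (Finset (V × Bool))) (w : Finset (V × Bool) → Fin k → ℕ)
    (Io : V → Bool) (hV : 4 * k ^ 2 < Fintype.card V) :
    ∃ V0 V1 : Finset V, Disjoint V0 V1 ∧ (∀ v ∈ V0, Io v = false) ∧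
      (∀ v ∈ V1, Io v = true) ∧ (V0 ∪ V1).card ≤ 4 * k ^ 2 ∧
      ∀ G : Finset (Finset (V × Bool)),
        G = H \ (H.filter (fun C => (∃ v ∈ V0, (v, false) ∈ C) ∨ ∃ v ∈ V1, (v, true) ∈ C)) →
        ∀ v, v ∉ V0 ∪ V1 → ∀ i : Fin k,
          4 * k * (∑ C ∈ G.filter (fun C => (v, Io v) ∈ C), w C i) ≤ ∑ C ∈ H \ G, w C i := by
  have hne : Nonempty V := by
    rw [← Fintype.card_pos_iff]; omega
  obtain ⟨S, hScard, hS⟩ := GreedyAux.phases H w Io k le_rfl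
  refine ⟨S.filter (fun v => Io v = false), S.filter (fun v => Io v = true), ?_, ?_, ?_, ?_, ?_⟩
  · rw [Finset.disjoint_left]
    intro v h0 h1
    rw [Finset.mem_filter] at h0 h1
    rw [h0.2] at h1
    exact absurd h1.2 (by simp)
  · intro v hv; exact (Finset.mem_filter.mp hv).2
  · intro v hv; exact (Finset.mem_filter.mp hv).2
  · have hU : S.filter (fun v => Io v = false) ∪ S.filter (fun v => Io v = true) = S := by
      ext v
      simp only [Finset.mem_union, Finset.mem_filter]
      cases h : Io v <;> simp [h]
    rw [hU]
    calc S.card ≤ k * (4 * k) := hScard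
      _ = 4 * k ^ 2 := by ring
  · intro G hG v hv i
    have hGeq : G = GreedyAux.Gset H Io S := by
      rw [hG, GreedyAux.Gset]
      congr 1
      apply Finset.filter_congr
      intro C hC
      constructor
      · rintro (⟨u, hu, hm⟩ | ⟨u, hu, hm⟩) <;>
          simp only [Finset.mem_filter] at hu
        · exact ⟨u, hu.1, by rw [hu.2]; exact hm⟩
        · exact ⟨u, hu.1, by rw [hu.2]; exact hm⟩
      · rintro ⟨u, hu, hm⟩
        cases h : Io u
        · exact Or.inl ⟨u, Finset.mem_filter.mpr ⟨hu, h⟩, by rwa [h] at hm⟩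
        · exact Or.inr ⟨u, Finset.mem_filter.mpr ⟨hu, h⟩, by rwa [h] at hm⟩
    rw [hGeq]
    exact hS i i.isLt v
end

section
/- Let c ≥ 2, n ≥ 1, m ≥ 1, A ∈ ℚ^{m×cn}, and let x, y ∈ ℚ^{cn} both satisfy the block constraints (entries of each length-c block sum to 1) and satisfy (A(p − x))_{|I} = 0 and (A(p − y))_{|I} = 0 for some fixed p ∈ ℚ^{cn} and index set I ⊆ {1,…,m}. Then for every λ ∈ ℚ, the point z = (1−λ)x + λy also satisfies the block constraints and (A(p − z))_{|I} = 0. Moreover, if 0 < x_j < 1 for all j in some nonempty set J and x_j = y_j for all j ∉ J, and x ≠ y, then there exists λ ∈ ℚ such that z ∈ [0,1]^{cn} and z has strictly more coordinates in {0,1} than x does. -/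
/-!
Each constraint is affine in every coordinate, so it holds along the whole line through two of
its solutions. For the rounding, move from `x` towards `y`: a coordinate where `x` and `y` differ
is strictly fractional and leaves `[0, 1]` only after a positive time, so stopping at the first
such exit time keeps the point in the cube, leaves the already integral coordinates (where
`x = y`) untouched, and makes one more coordinate integral.
-/

open Finset

theorem Finset.sum_eq_on_line {ι R : Type*} [CommRing R] (s : Finset ι) (f : ι → R → R)
    (hf : ∀ i u v t, f i ((1 - t) * u + t * v) = (1 - t) * f i u + t * f i v)
    {x y : ι → R} {a : R} (hx : ∑ i ∈ s, f i (x i) = a) (hy : ∑ i ∈ s, f i (y i) = a) (t : R) :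
    ∑ i ∈ s, f i ((1 - t) * x i + t * y i) = a := by
  simp only [hf, sum_add_distrib, ← mul_sum, hx, hy]
  ring

section Rounding

variable {K : Type*} [Field K] [LinearOrder K]

/-- For `u ∈ (0, 1)`, the time `t > 0` at which `(1 - t) * u + t * v` leaves `[0, 1]`: through
`1` if `u < v`, through `0` otherwise. -/
def exitTime (u v : K) : K :=
  if u < v then (1 - u) / (v - u) else u / (u - v)

variable {u v t : K}

theorem line_exitTime_eq_zero_or_one (huv : u ≠ v) :
    (1 - exitTime u v) * u + exitTime u v * v = 0 ∨
      (1 - exitTime u v) * u + exitTime u v * v = 1 := by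
  have hvu : v - u ≠ 0 := sub_ne_zero.2 huv.symm
  have huv' : u - v ≠ 0 := sub_ne_zero.2 huv
  unfold exitTime
  split_ifs
  · right; field_simp; ring
  · left; field_simp; ring

variable [IsStrictOrderedRing K]

theorem exitTime_pos (hu : u ∈ Set.Ioo 0 1) (huv : u ≠ v) : 0 < exitTime u v := by
  unfold exitTime
  split_ifs with h
  · exact div_pos (by linarith [hu.2]) (by linarith)
  · exact div_pos hu.1 (by linarith [lt_of_le_of_ne (not_lt.mp h) huv.symm])

theorem line_mem_Icc_of_le_exitTime (hu : u ∈ Set.Ioo 0 1) (huv : u ≠ v) (ht₀ : 0 ≤ t)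
    (ht : t ≤ exitTime u v) : (1 - t) * u + t * v ∈ Set.Icc 0 1 := by
  obtain ⟨hu₀, hu₁⟩ := hu
  unfold exitTime at ht
  split_ifs at ht with h
  · have := (le_div_iff₀ (sub_pos.2 h)).1 ht
    constructor <;> nlinarith
  · have h' : v < u := lt_of_le_of_ne (not_lt.mp h) huv.symm
    have := (le_div_iff₀ (sub_pos.2 h')).1 ht
    constructor <;> nlinarith

def integralCoords {ι : Type*} [Fintype ι] (x : ι → K) : Finset ι :=
  univ.filter fun j => x j = 0 ∨ x j = 1

theorem exists_line_mem_Icc_integralCoords_card_lt {ι : Type*} [Fintype ι] {x y : ι → K}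
    (hx : ∀ j, x j ∈ Set.Icc 0 1) (hfrac : ∀ j, x j ≠ y j → x j ∈ Set.Ioo 0 1) (hxy : x ≠ y) :
    ∃ t : K, (∀ j, (1 - t) * x j + t * y j ∈ Set.Icc 0 1) ∧
      #(integralCoords x) < #(integralCoords fun j => (1 - t) * x j + t * y j) := by
  have on_diag : ∀ {j} (t : K), x j = y j → (1 - t) * x j + t * y j = x j := by
    intro j t h; rw [← h]; ring
  let S := univ.filter fun j => x j ≠ y j
  have hS : S.Nonempty := by
    obtain ⟨j, hj⟩ := Function.ne_iff.1 hxy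
    exact ⟨j, mem_filter.2 ⟨mem_univ j, hj⟩⟩
  obtain ⟨j₀, hj₀S, hj₀min⟩ := S.exists_min_image (fun j => exitTime (x j) (y j)) hS
  have hj₀ : x j₀ ≠ y j₀ := (mem_filter.1 hj₀S).2
  set t := exitTime (x j₀) (y j₀)
  have ht : 0 ≤ t := (exitTime_pos (hfrac j₀ hj₀) hj₀).le
  refine ⟨t, fun j => ?_, card_lt_card ((ssubset_iff_of_subset fun j hj => ?_).2 ?_)⟩
  · by_cases h : x j = y j
    · rw [on_diag t h]; exact hx j
    · exact line_mem_Icc_of_le_exitTime (hfrac j h) h ht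
        (hj₀min j (mem_filter.2 ⟨mem_univ j, h⟩))
  · have hj := (mem_filter.1 hj).2
    have h : x j = y j := by
      by_contra h
      obtain ⟨h₀, h₁⟩ := hfrac j h
      rcases hj with hj | hj <;> linarith
    exact mem_filter.2 ⟨mem_univ j, by beta_reduce; rwa [on_diag t h]⟩
  · refine ⟨j₀, mem_filter.2 ⟨mem_univ j₀, line_exitTime_eq_zero_or_one hj₀⟩, fun h => ?_⟩
    obtain ⟨h₀, h₁⟩ := hfrac j₀ hj₀
    rcases (mem_filter.1 h).2 with h | h <;> linarith

end Rounding

theorem affine_rounding_step_general (m n c : ℕ)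
    (A : Matrix (Fin m) (Fin n × Fin c) ℚ) (p x y : Fin n × Fin c → ℚ)
    (I : Finset (Fin m))
    (hxb : ∀ b : Fin n, ∑ r : Fin c, x (b, r) = 1)
    (hyb : ∀ b : Fin n, ∑ r : Fin c, y (b, r) = 1)
    (hxI : ∀ i ∈ I, ∑ j, A i j * (p j - x j) = 0)
    (hyI : ∀ i ∈ I, ∑ j, A i j * (p j - y j) = 0) :
    (∀ lam : ℚ,
      (∀ b : Fin n, ∑ r : Fin c, ((1 - lam) * x (b, r) + lam * y (b, r)) = 1) ∧
      ∀ i ∈ I, ∑ j, A i j * (p j - ((1 - lam) * x j + lam * y j)) = 0) ∧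
    (∀ J : Finset (Fin n × Fin c), J.Nonempty →
      (∀ j ∈ J, 0 < x j ∧ x j < 1) → (∀ j ∉ J, x j = y j) → x ≠ y →
      (∀ j, 0 ≤ x j ∧ x j ≤ 1) →
      ∃ lam : ℚ,
        (∀ j, 0 ≤ (1 - lam) * x j + lam * y j ∧ (1 - lam) * x j + lam * y j ≤ 1) ∧
        (Finset.univ.filter (fun j : Fin n × Fin c => x j = 0 ∨ x j = 1)).card <
          (Finset.univ.filter (fun j : Fin n × Fin c =>
            (1 - lam) * x j + lam * y j = 0 ∨ (1 - lam) * x j + lam * y j = 1)).card) := by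
  refine ⟨fun lam => ⟨fun b => ?_, fun i hi => ?_⟩, ?_⟩
  · exact univ.sum_eq_on_line (fun _ u => u) (fun _ _ _ _ => rfl) (hxb b) (hyb b) lam
  · exact univ.sum_eq_on_line (fun j u => A i j * (p j - u)) (fun _ _ _ _ => by ring)
      (hxI i hi) (hyI i hi) lam
  · intro J _ hJ hagree hxy hx
    have hfrac : ∀ j, x j ≠ y j → x j ∈ Set.Ioo 0 1 := fun j h =>
      hJ j (by by_contra hj; exact h (hagree j hj))
    exact exists_line_mem_Icc_integralCoords_card_lt hx hfrac hxy

/-- Affine-line step of the iterative rounding in the multi-color Beck–Fiala theorem: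
every point on the line through two solutions of the linear system satisfies the block
constraints and the restricted equations, and if `x` is strictly fractional exactly on
`J` and agrees with `y` outside `J`, some point of the line lies in `[0,1]^{cn}` and has
strictly more coordinates in `{0,1}` than `x`. -/
theorem affine_rounding_step (m n c : ℕ) (hc : 2 ≤ c) (hn : 1 ≤ n) (hm : 1 ≤ m)
    (A : Matrix (Fin m) (Fin n × Fin c) ℚ) (p x y : Fin n × Fin c → ℚ)
    (I : Finset (Fin m))
    (hxb : ∀ b : Fin n, ∑ r : Fin c, x (b, r) = 1)
    (hyb : ∀ b : Fin n, ∑ r : Fin c, y (b, r) = 1)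
    (hxI : ∀ i ∈ I, ∑ j, A i j * (p j - x j) = 0)
    (hyI : ∀ i ∈ I, ∑ j, A i j * (p j - y j) = 0) :
    (∀ lam : ℚ,
      (∀ b : Fin n, ∑ r : Fin c, ((1 - lam) * x (b, r) + lam * y (b, r)) = 1) ∧
      ∀ i ∈ I, ∑ j, A i j * (p j - ((1 - lam) * x j + lam * y j)) = 0) ∧
    (∀ J : Finset (Fin n × Fin c), J.Nonempty →
      (∀ j ∈ J, 0 < x j ∧ x j < 1) → (∀ j ∉ J, x j = y j) → x ≠ y →
      (∀ j, 0 ≤ x j ∧ x j ≤ 1) →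
      ∃ lam : ℚ,
        (∀ j, 0 ≤ (1 - lam) * x j + lam * y j ∧ (1 - lam) * x j + lam * y j ≤ 1) ∧
        (Finset.univ.filter (fun j : Fin n × Fin c => x j = 0 ∨ x j = 1)).card <
          (Finset.univ.filter (fun j : Fin n × Fin c =>
            (1 - lam) * x j + lam * y j = 0 ∨ (1 - lam) * x j + lam * y j = 1)).card) :=
  affine_rounding_step_general m n c A p x y I hxb hyb hxI hyI
end
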